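/- arXiv:2507.12147 — 2 statements merged into one kernel-verified Lean document; each statement's English description precedes it below -/
import Mathlib

section
/- Let r ≥ 0 and set a = 2 e^{4r} ‖σ‖_{L^p[0,1]}³. There exists a constant C > 0, depending only on r, σ₁, σ₂, such that for every μ ∈ ℂ with Im μ > −r satisfying γ₁(μ) ≤ 1/(2a) and γ₂(μ) ≤ 1/(2a): if (v₁,v₂) is a solution of the Dirac system with parameter μ satisfying v₁(0) = 0 and v₂(1) = 1, then for all x ∈ [0,1], |e^{−iμ(1−x)} v₁(x)| ≤ C (γ₁(μ) + γ₂(μ) + γ₀₁(x,μ) + γ₀₂(x,μ)) and |e^{−iμ(1−x)} v₂(x) − 1| ≤ C (γ₁(μ) + γ₂(μ) + γ₀₁(x,μ) + γ₀₂(x,μ)). -/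
open MeasureTheory Set
open scoped ENNReal

noncomputable section

/-- The integral operator `K₁` associated with the Dirac system. -/
def K1 (σ₁ σ₂ : ℝ → ℂ) (μ : ℂ) (z : ℝ → ℂ) : ℝ → ℂ := fun x =>
  ∫ t in (0:ℝ)..x, σ₁ t * ∫ s in t..(1:ℝ),
    Complex.exp (2 * Complex.I * μ * (s - t)) * σ₂ s * z s

/-- The integral operator `K₂` associated with the Dirac system. -/
def K2 (σ₁ σ₂ : ℝ → ℂ) (μ : ℂ) (z : ℝ → ℂ) : ℝ → ℂ := fun x =>
  ∫ t in x..(1:ℝ), σ₂ t * ∫ s in (0:ℝ)..t,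
    Complex.exp (2 * Complex.I * μ * (t - s)) * σ₁ s * z s

/-- `γ₀₁(x,μ) = |∫₀ˣ e^{2iμ(x−t)} σ₁(t) dt|`. -/
def gamma01 (σ₁ : ℝ → ℂ) (μ : ℂ) (x : ℝ) : ℝ :=
  ‖∫ t in (0:ℝ)..x, Complex.exp (2 * Complex.I * μ * (x - t)) * σ₁ t‖

/-- `γ₀₂(x,μ) = |∫ₓ¹ e^{2iμ(t−x)} σ₂(t) dt|`. -/
def gamma02 (σ₂ : ℝ → ℂ) (μ : ℂ) (x : ℝ) : ℝ :=
  ‖∫ t in x..(1:ℝ), Complex.exp (2 * Complex.I * μ * (t - x)) * σ₂ t‖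

/-- `γ₁(μ) = ‖γ₀₁(·,μ)‖_{L^q[0,1]}`. -/
def gamma1 (σ₁ : ℝ → ℂ) (q : ℝ≥0∞) (μ : ℂ) : ℝ :=
  (eLpNorm (fun x => gamma01 σ₁ μ x) q (volume.restrict (Icc (0:ℝ) 1))).toReal

/-- `γ₂(μ) = ‖γ₀₂(·,μ)‖_{L^q[0,1]}`. -/
def gamma2 (σ₂ : ℝ → ℂ) (q : ℝ≥0∞) (μ : ℂ) : ℝ :=
  (eLpNorm (fun x => gamma02 σ₂ μ x) q (volume.restrict (Icc (0:ℝ) 1))).toReal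

/-- `γ̃(μ) = ∫₀¹ |σ₂| γ₀₁² + ∫₀¹ |σ₁| γ₀₂²`. -/
def gammaT (σ₁ σ₂ : ℝ → ℂ) (μ : ℂ) : ℝ :=
  (∫ s in (0:ℝ)..1, ‖σ₂ s‖ * (gamma01 σ₁ μ s) ^ 2)
    + ∫ s in (0:ℝ)..1, ‖σ₁ s‖ * (gamma02 σ₂ μ s) ^ 2

/-- `‖σ‖_{L^p[0,1]}` where `σ(x) = max(|σ₁(x)|,|σ₂(x)|)`. -/
def sigmaNorm (σ₁ σ₂ : ℝ → ℂ) (p : ℝ≥0∞) : ℝ :=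
  (eLpNorm (fun x => max ‖σ₁ x‖ ‖σ₂ x‖) p (volume.restrict (Icc (0:ℝ) 1))).toReal

/-- The constant function `1` on `[0,1]`. -/
def eFun : ℝ → ℂ := fun _ => 1

/-- A solution of the Dirac system `y₁' + σ₁ y₂ = iμ y₁`, `y₂' + σ₂ y₁ = −iμ y₂` on `[0,1]`,
with `y₁, y₂` absolutely continuous (i.e. in `W^{1,1}[0,1]`, so each is the indefinite
integral of an integrable function, and the equations hold a.e. with those derivatives). -/
def IsDiracSolution (σ₁ σ₂ : ℝ → ℂ) (μ : ℂ) (y₁ y₂ : ℝ → ℂ) : Prop :=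
  ∃ g₁ g₂ : ℝ → ℂ,
    IntervalIntegrable g₁ volume 0 1 ∧ IntervalIntegrable g₂ volume 0 1 ∧
    (∀ x ∈ Icc (0:ℝ) 1, y₁ x = y₁ 0 + ∫ t in (0:ℝ)..x, g₁ t) ∧
    (∀ x ∈ Icc (0:ℝ) 1, y₂ x = y₂ 0 + ∫ t in (0:ℝ)..x, g₂ t) ∧
    (∀ᵐ x ∂(volume.restrict (Icc (0:ℝ) 1)),
      g₁ x + σ₁ x * y₂ x = Complex.I * μ * y₁ x) ∧
    (∀ᵐ x ∂(volume.restrict (Icc (0:ℝ) 1)),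
      g₂ x + σ₂ x * y₁ x = -(Complex.I * μ) * y₂ x)

/-!
With `u = e^{-iμ(1-x)} v₁` and `z = e^{-iμ(1-x)} v₂` the boundary value problem becomes the pair
of integral equations `u(y) = -∫₀^y e^{2iμ(y-t)} σ₁ z` and `z(y) - 1 = ∫_y^1 σ₂ u`, whose kernel
is bounded by `e^{2r}` when `Im μ ≥ -r`. Let `M = sup |z - 1|`. Estimating `u` directly only gives
`|u| ≤ e^{2r} (1 + M) ‖σ₁‖₁`, which does not close up. Instead, substitute
`z(s) = z(t) + ∫_s^t σ₂ u` into the equation for `u(t)` and swap the integrals: the oscillating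
kernel then only enters through `∫₀^τ e^{2iμ(t-s)} σ₁(s) ds = e^{2iμ(t-τ)} ∫₀^τ e^{2iμ(τ-s)} σ₁`,
of modulus at most `e^{2r} γ₀₁(τ)`. Integrating against `|σ₂|` yields
`M ≤ B + 2 e^{4r} ‖σ₁‖₁ ‖σ₂‖₁ B (1 + M)` with `B = ∫ |σ₂| γ₀₁ ≤ ‖σ‖_p γ₁` by Hölder. The
hypothesis on `γ₁` makes the coefficient of `M` at most `1/2`, so `M = O(γ₁)`, and then
`|u(x)| ≤ γ₀₁(x) + e^{2r} M ‖σ₁‖₁`.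
-/

theorem IntervalIntegrable.mono_set_Icc {E : Type*} [NormedAddCommGroup E] {f : ℝ → E}
    {a b c d : ℝ} (hf : IntervalIntegrable f volume a b) (hc : c ∈ Icc a b) (hd : d ∈ Icc a b) :
    IntervalIntegrable f volume c d :=
  hf.mono_set (uIcc_subset_uIcc (Icc_subset_uIcc hc) (Icc_subset_uIcc hd))

theorem integral_mul_integral_swap {a b : ℝ} (hab : a ≤ b) {f g : ℝ → ℂ}
    (hf : IntervalIntegrable f volume a b) (hg : IntervalIntegrable g volume a b) :
    ∫ t in a..b, f t * ∫ s in a..t, g s = ∫ s in a..b, (∫ t in s..b, f t) * g s := by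
  set Φ : ℝ → ℝ → ℂ := fun t s => (Iic t).indicator (fun s => f t * g s) s
  have hΦ : Φ.uncurry = {p : ℝ × ℝ | p.2 ≤ p.1}.indicator (fun p => f p.1 * g p.2) := by
    ext ⟨t, s⟩
    simp [Φ, indicator_apply]
  have hint : Integrable Φ.uncurry
      ((volume.restrict (Ioc a b)).prod (volume.restrict (Ioc a b))) := by
    rw [hΦ]
    exact (hf.1.mul_prod hg.1).indicator (measurableSet_le measurable_snd measurable_fst)
  have hL : ∀ t ∈ Ioc a b, f t * ∫ s in a..t, g s = ∫ s in Ioc a b, Φ t s := by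
    intro t ht
    rw [setIntegral_indicator measurableSet_Iic, Ioc_inter_Iic, inf_eq_right.2 ht.2,
      intervalIntegral.integral_of_le ht.1.le, integral_const_mul]
  have hR : ∀ s ∈ Ioc a b, (∫ t in s..b, f t) * g s = ∫ t in Ioc a b, Φ t s := by
    intro s hs
    have hΦs : ∀ t, Φ t s = (Ici s).indicator (fun t => f t * g s) t := by
      intro t
      simp [Φ, indicator_apply]
    have hset : Ioc a b ∩ Ici s = Icc s b := by
      ext t
      simp only [mem_inter_iff, mem_Ioc, mem_Ici, mem_Icc]
      constructor
      · rintro ⟨⟨-, htb⟩, hst⟩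
        exact ⟨hst, htb⟩
      · rintro ⟨hst, htb⟩
        exact ⟨⟨hs.1.trans_le hst, htb⟩, hst⟩
    simp_rw [hΦs]
    rw [setIntegral_indicator measurableSet_Ici, hset, integral_Icc_eq_integral_Ioc,
      intervalIntegral.integral_of_le hs.2, integral_mul_const]
  rw [intervalIntegral.integral_of_le hab, intervalIntegral.integral_of_le hab,
    setIntegral_congr_fun measurableSet_Ioc hL, setIntegral_congr_fun measurableSet_Ioc hR]
  exact integral_integral_swap hint

theorem hasDerivAt_cexp_mul (c : ℂ) (t : ℝ) :
    HasDerivAt (fun t : ℝ => Complex.exp (c * t)) (c * Complex.exp (c * t)) t := by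
  have h : HasDerivAt (fun t : ℝ => c * (t : ℂ)) c t := by
    simpa using Complex.ofRealCLM.hasDerivAt.const_mul c
  simpa [mul_comm] using h.cexp

theorem integral_mul_cexp_mul (c : ℂ) (a b : ℝ) :
    ∫ t in a..b, c * Complex.exp (c * t) = Complex.exp (c * b) - Complex.exp (c * a) :=
  intervalIntegral.integral_eq_sub_of_hasDerivAt (fun t _ => hasDerivAt_cexp_mul c t)
    (Continuous.intervalIntegrable (by fun_prop) a b)

theorem integral_cexp_mul_add_eq_sub (c : ℂ) {a b : ℝ} (hab : a ≤ b) {g v : ℝ → ℂ}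
    (hg : IntervalIntegrable g volume a b) (hv : ∀ t ∈ Icc a b, v t = v a + ∫ s in a..t, g s) :
    ∫ t in a..b, Complex.exp (c * t) * (g t + c * v t)
      = Complex.exp (c * b) * v b - Complex.exp (c * a) * v a := by
  have hE : Continuous fun t : ℝ => Complex.exp (c * t) := by fun_prop
  have hcE : IntervalIntegrable (fun t : ℝ => c * Complex.exp (c * t)) volume a b :=
    (continuous_const.mul hE).intervalIntegrable a b
  have hG : ContinuousOn (fun t => ∫ s in a..t, g s) (uIcc a b) :=
    intervalIntegral.continuousOn_primitive_interval' hg left_mem_uIcc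
  have hEg : IntervalIntegrable (fun t => Complex.exp (c * t) * g t) volume a b :=
    hg.continuousOn_mul hE.continuousOn
  calc ∫ t in a..b, Complex.exp (c * t) * (g t + c * v t)
      = ∫ t in a..b, (Complex.exp (c * t) * g t + c * Complex.exp (c * t) * v a
          + c * Complex.exp (c * t) * ∫ s in a..t, g s) := by
        refine intervalIntegral.integral_congr fun t ht => ?_
        rw [uIcc_of_le hab] at ht
        simp only [hv t ht]
        ring
    _ = (∫ t in a..b, Complex.exp (c * t) * g t) + (Complex.exp (c * b) - Complex.exp (c * a)) * v a
          + ∫ s in a..b, (∫ t in s..b, c * Complex.exp (c * t)) * g s := by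
        rw [intervalIntegral.integral_add (hEg.add (hcE.mul_const _)) (hcE.mul_continuousOn hG),
          intervalIntegral.integral_add hEg (hcE.mul_const _), intervalIntegral.integral_mul_const,
          integral_mul_cexp_mul, integral_mul_integral_swap hab hcE hg]
    _ = Complex.exp (c * b) * (v a + ∫ s in a..b, g s) - Complex.exp (c * a) * v a := by
        simp_rw [integral_mul_cexp_mul, sub_mul]
        rw [intervalIntegral.integral_sub (hg.const_mul _) hEg, intervalIntegral.integral_const_mul]
        ring
    _ = Complex.exp (c * b) * v b - Complex.exp (c * a) * v a := by
        rw [← hv b (right_mem_Icc.2 hab)]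

def expKernel (μ : ℂ) (x t : ℝ) : ℂ := Complex.exp (2 * Complex.I * μ * (x - t))

section Kernel

variable {μ : ℂ} {r : ℝ}

theorem continuous_expKernel_left (μ : ℂ) (t : ℝ) : Continuous fun x => expKernel μ x t := by
  unfold expKernel; fun_prop

theorem continuous_expKernel_right (μ : ℂ) (x : ℝ) : Continuous (expKernel μ x) := by
  unfold expKernel; fun_prop

theorem expKernel_mul_expKernel (μ : ℂ) (x y t : ℝ) :
    expKernel μ x y * expKernel μ y t = expKernel μ x t := by
  simp only [expKernel, ← Complex.exp_add]
  ring_nf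

theorem norm_expKernel_le (hr : 0 ≤ r) (hμ : -r ≤ μ.im) {x t : ℝ} (htx : t ≤ x)
    (hxt : x ≤ t + 1) : ‖expKernel μ x t‖ ≤ Real.exp (2 * r) := by
  rw [expKernel, Complex.norm_exp, Real.exp_le_exp]
  have hre : (2 * Complex.I * μ * ((x : ℂ) - t)).re = -2 * μ.im * (x - t) := by
    simp [Complex.mul_re, Complex.mul_im]
  rw [hre]
  nlinarith

theorem integral_expKernel_mul_eq_mul (μ : ℂ) (σ : ℝ → ℂ) (x y a b : ℝ) :
    ∫ t in a..b, expKernel μ x t * σ t = expKernel μ x y * ∫ t in a..b, expKernel μ y t * σ t := by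
  rw [← intervalIntegral.integral_const_mul]
  simp_rw [← mul_assoc, expKernel_mul_expKernel]

theorem norm_integral_expKernel_mul_le_gamma01 (hr : 0 ≤ r) (hμ : -r ≤ μ.im) (σ : ℝ → ℂ)
    {x s : ℝ} (hsx : s ≤ x) (hxs : x ≤ s + 1) :
    ‖∫ t in (0:ℝ)..s, expKernel μ x t * σ t‖ ≤ Real.exp (2 * r) * gamma01 σ μ s := by
  rw [integral_expKernel_mul_eq_mul μ σ x s, norm_mul]
  exact mul_le_mul_of_nonneg_right (norm_expKernel_le hr hμ hsx hxs) (norm_nonneg _)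

theorem continuousOn_gamma01 {σ : ℝ → ℂ} (hσ : IntervalIntegrable σ volume 0 1) :
    ContinuousOn (gamma01 σ μ) (Icc 0 1) := by
  have hprim := intervalIntegral.continuousOn_primitive_interval'
    (hσ.continuousOn_mul (continuous_expKernel_right μ 0).continuousOn) left_mem_uIcc
  rw [uIcc_of_le zero_le_one] at hprim
  refine (((continuous_expKernel_left μ 0).continuousOn.mul hprim).norm).congr fun x _ => ?_
  exact congrArg norm (integral_expKernel_mul_eq_mul μ σ x 0 0 x)

theorem intervalIntegrable_expKernel_mul {σ w : ℝ → ℂ} (hσ : IntervalIntegrable σ volume 0 1)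
    (hw : ContinuousOn w (Icc 0 1)) (x : ℝ) {t : ℝ} (ht : t ∈ Icc (0:ℝ) 1) :
    IntervalIntegrable (fun s => expKernel μ x s * (σ s * w s)) volume 0 t :=
  ((hσ.mono_set_Icc ⟨le_rfl, zero_le_one⟩ ht).mul_continuousOn
    (hw.mono (uIcc_subset_Icc ⟨le_rfl, zero_le_one⟩ ht))).continuousOn_mul
    (continuous_expKernel_right μ x).continuousOn

theorem norm_integral_expKernel_mul_le (hr : 0 ≤ r) (hμ : -r ≤ μ.im) {σ w : ℝ → ℂ}
    (hσ : IntervalIntegrable σ volume 0 1) {t M : ℝ} (ht : t ∈ Icc (0:ℝ) 1)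
    (hw : ∀ s ∈ Icc 0 t, ‖w s‖ ≤ M) :
    ‖∫ s in (0:ℝ)..t, expKernel μ t s * (σ s * w s)‖
      ≤ Real.exp (2 * r) * M * ∫ s in (0:ℝ)..1, ‖σ s‖ := by
  have hM : 0 ≤ M := (norm_nonneg _).trans (hw t ⟨ht.1, le_rfl⟩)
  have hbound : IntervalIntegrable (fun s => Real.exp (2 * r) * M * ‖σ s‖) volume 0 1 :=
    hσ.norm.const_mul _
  calc ‖∫ s in (0:ℝ)..t, expKernel μ t s * (σ s * w s)‖
      ≤ ∫ s in (0:ℝ)..t, Real.exp (2 * r) * M * ‖σ s‖ := by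
        refine intervalIntegral.norm_integral_le_of_norm_le ht.1 (ae_of_all _ fun s hs => ?_)
          (hbound.mono_set_Icc ⟨le_rfl, zero_le_one⟩ ht)
        rw [norm_mul, norm_mul]
        have hK := norm_expKernel_le hr hμ hs.2 (by linarith [hs.1, ht.2] : t ≤ s + 1)
        have hws := hw s ⟨hs.1.le, hs.2⟩
        calc ‖expKernel μ t s‖ * (‖σ s‖ * ‖w s‖) ≤ Real.exp (2 * r) * (‖σ s‖ * M) := by gcongr
          _ = Real.exp (2 * r) * M * ‖σ s‖ := by ring
    _ ≤ ∫ s in (0:ℝ)..1, Real.exp (2 * r) * M * ‖σ s‖ :=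
        intervalIntegral.integral_mono_interval le_rfl ht.1 ht.2
          (ae_of_all _ fun s => by positivity) hbound
    _ = Real.exp (2 * r) * M * ∫ s in (0:ℝ)..1, ‖σ s‖ := intervalIntegral.integral_const_mul _ _

end Kernel

def rescale (μ : ℂ) (v : ℝ → ℂ) (x : ℝ) : ℂ := Complex.exp (-(Complex.I * μ * (1 - x))) * v x

structure IntegralSystem (σ₁ σ₂ : ℝ → ℂ) (μ : ℂ) (u z : ℝ → ℂ) : Prop where
  continuousOn_fst : ContinuousOn u (Icc 0 1)
  continuousOn_snd : ContinuousOn z (Icc 0 1)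
  fst_eq : ∀ y ∈ Icc (0:ℝ) 1, u y = -∫ t in (0:ℝ)..y, expKernel μ y t * (σ₁ t * z t)
  snd_sub_one_eq : ∀ y ∈ Icc (0:ℝ) 1, z y - 1 = ∫ t in y..(1:ℝ), σ₂ t * u t

theorem continuousOn_of_eq_add_primitive {g v : ℝ → ℂ} (hg : IntervalIntegrable g volume 0 1)
    (hv : ∀ t ∈ Icc (0:ℝ) 1, v t = v 0 + ∫ s in (0:ℝ)..t, g s) : ContinuousOn v (Icc 0 1) := by
  have hprim := intervalIntegral.continuousOn_primitive_interval' hg left_mem_uIcc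
  rw [uIcc_of_le zero_le_one] at hprim
  exact (continuousOn_const.add hprim).congr hv

theorem eq_add_primitive_of_mem_Icc {g v : ℝ → ℂ} (hg : IntervalIntegrable g volume 0 1)
    (hv : ∀ t ∈ Icc (0:ℝ) 1, v t = v 0 + ∫ s in (0:ℝ)..t, g s) {a b : ℝ} (ha : 0 ≤ a)
    (hb : b ≤ 1) : ∀ t ∈ Icc a b, v t = v a + ∫ s in a..t, g s := by
  intro t ht
  have hat : a ≤ t := ht.1
  have ha1 : a ∈ Icc (0:ℝ) 1 := ⟨ha, hat.trans (ht.2.trans hb)⟩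
  have ht1 : t ∈ Icc (0:ℝ) 1 := ⟨ha.trans hat, ht.2.trans hb⟩
  rw [hv t ht1, hv a ha1, add_assoc, intervalIntegral.integral_add_adjacent_intervals
    (hg.mono_set_Icc ⟨le_rfl, zero_le_one⟩ ha1) (hg.mono_set_Icc ha1 ht1)]

namespace IsDiracSolution

variable {σ₁ σ₂ : ℝ → ℂ} {μ : ℂ} {v₁ v₂ : ℝ → ℂ}

theorem rescale_fst_eq (h : IsDiracSolution σ₁ σ₂ μ v₁ v₂) (h₁ : v₁ 0 = 0) {y : ℝ}
    (hy : y ∈ Icc (0:ℝ) 1) :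
    rescale μ v₁ y = -∫ t in (0:ℝ)..y, expKernel μ y t * (σ₁ t * rescale μ v₂ t) := by
  obtain ⟨g₁, -, hg₁, -, hv₁, -, hode₁, -⟩ := h
  have hode : ∀ᵐ t, t ∈ uIoc 0 y → g₁ t + -(Complex.I * μ) * v₁ t = -(σ₁ t * v₂ t) := by
    filter_upwards [(ae_restrict_iff' measurableSet_Icc).1 hode₁] with t ht hty
    linear_combination ht (uIcc_subset_Icc ⟨le_rfl, zero_le_one⟩ hy (uIoc_subset_uIcc hty))
  have key := integral_cexp_mul_add_eq_sub (-(Complex.I * μ)) hy.1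
    (hg₁.mono_set_Icc ⟨le_rfl, zero_le_one⟩ hy) (eq_add_primitive_of_mem_Icc hg₁ hv₁ le_rfl hy.2)
  rw [intervalIntegral.integral_congr_ae (hode.mono fun t ht hty => by rw [ht hty]), h₁,
    mul_zero, sub_zero] at key
  calc rescale μ v₁ y
      = Complex.exp (-(Complex.I * μ * (1 - y)) + Complex.I * μ * y)
          * (Complex.exp (-(Complex.I * μ) * y) * v₁ y) := by
        rw [rescale, ← mul_assoc, ← Complex.exp_add]
        ring_nf
    _ = -∫ t in (0:ℝ)..y, expKernel μ y t * (σ₁ t * rescale μ v₂ t) := by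
        rw [← key, ← intervalIntegral.integral_const_mul, ← intervalIntegral.integral_neg]
        refine intervalIntegral.integral_congr fun t _ => ?_
        have hexp : Complex.exp (-(Complex.I * μ * (1 - y)) + Complex.I * μ * y)
              * Complex.exp (-(Complex.I * μ) * t)
            = expKernel μ y t * Complex.exp (-(Complex.I * μ * (1 - t))) := by
          simp only [expKernel, ← Complex.exp_add]
          ring_nf
        simp only [rescale]
        linear_combination (-(σ₁ t * v₂ t)) * hexp

theorem rescale_snd_sub_one_eq (h : IsDiracSolution σ₁ σ₂ μ v₁ v₂) (h₂ : v₂ 1 = 1) {y : ℝ}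
    (hy : y ∈ Icc (0:ℝ) 1) :
    rescale μ v₂ y - 1 = ∫ t in y..(1:ℝ), σ₂ t * rescale μ v₁ t := by
  obtain ⟨-, g₂, -, hg₂, -, hv₂, -, hode₂⟩ := h
  have hode : ∀ᵐ t, t ∈ uIoc y 1 → g₂ t + Complex.I * μ * v₂ t = -(σ₂ t * v₁ t) := by
    filter_upwards [(ae_restrict_iff' measurableSet_Icc).1 hode₂] with t ht hty
    linear_combination ht (uIcc_subset_Icc hy ⟨zero_le_one, le_rfl⟩ (uIoc_subset_uIcc hty))
  have key := integral_cexp_mul_add_eq_sub (Complex.I * μ) hy.2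
    (hg₂.mono_set_Icc hy ⟨zero_le_one, le_rfl⟩) (eq_add_primitive_of_mem_Icc hg₂ hv₂ hy.1 le_rfl)
  rw [intervalIntegral.integral_congr_ae (hode.mono fun t ht hty => by rw [ht hty]), h₂] at key
  have hsplit : ∀ t : ℝ, Complex.exp (-(Complex.I * μ * (1 - t)))
      = Complex.exp (-(Complex.I * μ)) * Complex.exp (Complex.I * μ * t) := by
    intro t
    rw [← Complex.exp_add]
    ring_nf
  calc rescale μ v₂ y - 1
      = Complex.exp (-(Complex.I * μ)) * -(Complex.exp (Complex.I * μ * (1:ℝ)) * 1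
          - Complex.exp (Complex.I * μ * y) * v₂ y) := by
        have h1 : Complex.exp (-(Complex.I * μ)) * Complex.exp (Complex.I * μ * (1:ℝ)) = 1 := by
          rw [← Complex.exp_add]
          simp
        rw [rescale, hsplit]
        linear_combination h1
    _ = ∫ t in y..(1:ℝ), σ₂ t * rescale μ v₁ t := by
        rw [← key, ← intervalIntegral.integral_neg, ← intervalIntegral.integral_const_mul]
        refine intervalIntegral.integral_congr fun t _ => ?_
        simp only [rescale, hsplit]
        ring

theorem integralSystem (h : IsDiracSolution σ₁ σ₂ μ v₁ v₂) (h₁ : v₁ 0 = 0) (h₂ : v₂ 1 = 1) :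
    IntegralSystem σ₁ σ₂ μ (rescale μ v₁) (rescale μ v₂) := by
  have hE : Continuous fun t : ℝ => Complex.exp (-(Complex.I * μ * (1 - t))) := by fun_prop
  refine ⟨?_, ?_, fun _ hy => h.rescale_fst_eq h₁ hy,
    fun _ hy => h.rescale_snd_sub_one_eq h₂ hy⟩ <;> obtain ⟨g₁, g₂, hg₁, hg₂, hv₁, hv₂, -⟩ := h
  · exact hE.continuousOn.mul (continuousOn_of_eq_add_primitive hg₁ hv₁)
  · exact hE.continuousOn.mul (continuousOn_of_eq_add_primitive hg₂ hv₂)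

end IsDiracSolution

namespace IntegralSystem

variable {σ₁ σ₂ u z : ℝ → ℂ} {μ : ℂ} {r : ℝ}

theorem norm_fst_le (h : IntegralSystem σ₁ σ₂ μ u z) (hr : 0 ≤ r) (hμ : -r ≤ μ.im)
    (hσ₁ : IntervalIntegrable σ₁ volume 0 1) {M : ℝ} (hM : ∀ s ∈ Icc (0:ℝ) 1, ‖z s‖ ≤ M)
    {t : ℝ} (ht : t ∈ Icc (0:ℝ) 1) :
    ‖u t‖ ≤ Real.exp (2 * r) * M * ∫ s in (0:ℝ)..1, ‖σ₁ s‖ := by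
  rw [h.fst_eq t ht, norm_neg]
  exact norm_integral_expKernel_mul_le hr hμ hσ₁ ht fun s hs => hM s ⟨hs.1, hs.2.trans ht.2⟩

theorem norm_fst_le_gamma01_add (h : IntegralSystem σ₁ σ₂ μ u z) (hr : 0 ≤ r) (hμ : -r ≤ μ.im)
    (hσ₁ : IntervalIntegrable σ₁ volume 0 1) {M : ℝ} (hM : ∀ s ∈ Icc (0:ℝ) 1, ‖z s - 1‖ ≤ M)
    {t : ℝ} (ht : t ∈ Icc (0:ℝ) 1) :
    ‖u t‖ ≤ gamma01 σ₁ μ t + Real.exp (2 * r) * M * ∫ s in (0:ℝ)..1, ‖σ₁ s‖ := by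
  have hsplit : u t = -(∫ s in (0:ℝ)..t, expKernel μ t s * σ₁ s)
      - ∫ s in (0:ℝ)..t, expKernel μ t s * (σ₁ s * (z s - 1)) := by
    rw [h.fst_eq t ht, ← neg_add', ← intervalIntegral.integral_add
      ((hσ₁.mono_set_Icc ⟨le_rfl, zero_le_one⟩ ht).continuousOn_mul
        (continuous_expKernel_right μ t).continuousOn)
      (intervalIntegrable_expKernel_mul (w := fun s => z s - 1) hσ₁
        (h.continuousOn_snd.sub continuousOn_const) t ht)]
    congr 1
    refine intervalIntegral.integral_congr fun s _ => ?_
    ring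
  rw [hsplit]
  refine (norm_sub_le _ _).trans (add_le_add (norm_neg _).le ?_)
  exact norm_integral_expKernel_mul_le hr hμ hσ₁ ht fun s hs => hM s ⟨hs.1, hs.2.trans ht.2⟩

theorem snd_eq_add (h : IntegralSystem σ₁ σ₂ μ u z) (hσ₂ : IntervalIntegrable σ₂ volume 0 1)
    {s t : ℝ} (hs : s ∈ Icc (0:ℝ) 1) (ht : t ∈ Icc (0:ℝ) 1) :
    z s = z t + ∫ τ in s..t, σ₂ τ * u τ := by
  have hσ₂u : IntervalIntegrable (fun τ => σ₂ τ * u τ) volume 0 1 :=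
    hσ₂.mul_continuousOn (by rw [uIcc_of_le zero_le_one]; exact h.continuousOn_fst)
  have h1 : (1:ℝ) ∈ Icc (0:ℝ) 1 := ⟨zero_le_one, le_rfl⟩
  have := intervalIntegral.integral_add_adjacent_intervals (hσ₂u.mono_set_Icc hs ht)
    (hσ₂u.mono_set_Icc ht h1)
  linear_combination h.snd_sub_one_eq s hs - h.snd_sub_one_eq t ht - this

theorem fst_eq_sub_integral (h : IntegralSystem σ₁ σ₂ μ u z)
    (hσ₁ : IntervalIntegrable σ₁ volume 0 1) (hσ₂ : IntervalIntegrable σ₂ volume 0 1) {t : ℝ}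
    (ht : t ∈ Icc (0:ℝ) 1) :
    u t = -(∫ s in (0:ℝ)..t, expKernel μ t s * σ₁ s) * z t
      - ∫ τ in (0:ℝ)..t, (∫ s in (0:ℝ)..τ, expKernel μ t s * σ₁ s) * (σ₂ τ * u τ) := by
  have h0t : uIcc 0 t ⊆ Icc (0:ℝ) 1 := uIcc_subset_Icc ⟨le_rfl, zero_le_one⟩ ht
  have hKσ : IntervalIntegrable (fun s => expKernel μ t s * σ₁ s) volume 0 t :=
    (hσ₁.mono_set_Icc ⟨le_rfl, zero_le_one⟩ ht).continuousOn_mul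
      (continuous_expKernel_right μ t).continuousOn
  have hσ₂u : IntervalIntegrable (fun τ => σ₂ τ * u τ) volume 0 t :=
    (hσ₂.mono_set_Icc ⟨le_rfl, zero_le_one⟩ ht).mul_continuousOn (h.continuousOn_fst.mono h0t)
  have hQ : ContinuousOn (fun s => ∫ τ in s..t, σ₂ τ * u τ) (uIcc 0 t) :=
    intervalIntegral.continuousOn_primitive_interval_left
      ((intervalIntegrable_iff' enorm_ne_top).1 hσ₂u)
  have hswap : ∫ s in (0:ℝ)..t, expKernel μ t s * σ₁ s * ∫ τ in s..t, σ₂ τ * u τ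
      = ∫ τ in (0:ℝ)..t, (∫ s in (0:ℝ)..τ, expKernel μ t s * σ₁ s) * (σ₂ τ * u τ) := by
    calc ∫ s in (0:ℝ)..t, expKernel μ t s * σ₁ s * ∫ τ in s..t, σ₂ τ * u τ
        = ∫ s in (0:ℝ)..t, (∫ τ in s..t, σ₂ τ * u τ) * (expKernel μ t s * σ₁ s) :=
          intervalIntegral.integral_congr fun s _ => mul_comm _ _
      _ = ∫ τ in (0:ℝ)..t, (σ₂ τ * u τ) * ∫ s in (0:ℝ)..τ, expKernel μ t s * σ₁ s :=
          (integral_mul_integral_swap ht.1 hσ₂u hKσ).symm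
      _ = _ := intervalIntegral.integral_congr fun τ _ => mul_comm _ _
  have hz : ∀ s ∈ uIcc 0 t, expKernel μ t s * (σ₁ s * z s)
      = expKernel μ t s * σ₁ s * z t + expKernel μ t s * σ₁ s * ∫ τ in s..t, σ₂ τ * u τ := by
    intro s hs
    rw [h.snd_eq_add hσ₂ (h0t hs) ht]
    ring
  rw [h.fst_eq t ht, intervalIntegral.integral_congr hz, intervalIntegral.integral_add
    (hKσ.mul_const _) (hKσ.mul_continuousOn hQ), intervalIntegral.integral_mul_const, hswap]
  ring

theorem norm_fst_le_gamma01_mul (h : IntegralSystem σ₁ σ₂ μ u z) (hr : 0 ≤ r) (hμ : -r ≤ μ.im)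
    (hσ₁ : IntervalIntegrable σ₁ volume 0 1) (hσ₂ : IntervalIntegrable σ₂ volume 0 1) {U : ℝ}
    (hU : ∀ s ∈ Icc (0:ℝ) 1, ‖u s‖ ≤ U) {t : ℝ} (ht : t ∈ Icc (0:ℝ) 1) :
    ‖u t‖ ≤ gamma01 σ₁ μ t * ‖z t‖
      + Real.exp (2 * r) * U * ∫ s in (0:ℝ)..1, ‖σ₂ s‖ * gamma01 σ₁ μ s := by
  have hU0 : 0 ≤ U := (norm_nonneg _).trans (hU 0 ⟨le_rfl, zero_le_one⟩)
  have hbound : IntervalIntegrable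
      (fun τ => Real.exp (2 * r) * U * (‖σ₂ τ‖ * gamma01 σ₁ μ τ)) volume 0 1 :=
    (hσ₂.norm.mul_continuousOn
      (by rw [uIcc_of_le zero_le_one]; exact continuousOn_gamma01 hσ₁)).const_mul _
  rw [h.fst_eq_sub_integral hσ₁ hσ₂ ht, ← intervalIntegral.integral_const_mul]
  refine (norm_sub_le _ _).trans (add_le_add (by rw [norm_mul, norm_neg]; rfl) ?_)
  calc ‖∫ τ in (0:ℝ)..t, (∫ s in (0:ℝ)..τ, expKernel μ t s * σ₁ s) * (σ₂ τ * u τ)‖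
      ≤ ∫ τ in (0:ℝ)..t, Real.exp (2 * r) * U * (‖σ₂ τ‖ * gamma01 σ₁ μ τ) := by
        refine intervalIntegral.norm_integral_le_of_norm_le ht.1 (ae_of_all _ fun τ hτ => ?_)
          (hbound.mono_set_Icc ⟨le_rfl, zero_le_one⟩ ht)
        have hK := norm_integral_expKernel_mul_le_gamma01 hr hμ σ₁ hτ.2
          (by linarith [hτ.1, ht.2] : t ≤ τ + 1)
        have huτ := hU τ ⟨hτ.1.le, hτ.2.trans ht.2⟩
        rw [norm_mul, norm_mul]
        calc _ ≤ Real.exp (2 * r) * gamma01 σ₁ μ τ * (‖σ₂ τ‖ * U) := by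
              gcongr
              exact mul_nonneg (Real.exp_pos _).le (norm_nonneg _)
          _ = _ := by ring
    _ ≤ ∫ τ in (0:ℝ)..1, Real.exp (2 * r) * U * (‖σ₂ τ‖ * gamma01 σ₁ μ τ) :=
        intervalIntegral.integral_mono_interval le_rfl ht.1 ht.2
          (ae_of_all _ fun τ => by unfold gamma01; positivity) hbound

theorem norm_snd_sub_one_le (h : IntegralSystem σ₁ σ₂ μ u z)
    (hσ₂ : IntervalIntegrable σ₂ volume 0 1) {F : ℝ → ℝ} (hF : ContinuousOn F (Icc 0 1))
    (hu : ∀ s ∈ Icc (0:ℝ) 1, ‖u s‖ ≤ F s) {t : ℝ} (ht : t ∈ Icc (0:ℝ) 1) :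
    ‖z t - 1‖ ≤ ∫ s in (0:ℝ)..1, ‖σ₂ s‖ * F s := by
  have hbound : IntervalIntegrable (fun s => ‖σ₂ s‖ * F s) volume 0 1 :=
    hσ₂.norm.mul_continuousOn (by rwa [uIcc_of_le zero_le_one])
  rw [h.snd_sub_one_eq t ht]
  calc ‖∫ s in t..(1:ℝ), σ₂ s * u s‖ ≤ ∫ s in t..(1:ℝ), ‖σ₂ s‖ * F s := by
        refine intervalIntegral.norm_integral_le_of_norm_le ht.2 (ae_of_all _ fun s hs => ?_)
          (hbound.mono_set_Icc ht ⟨zero_le_one, le_rfl⟩)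
        rw [norm_mul]
        exact mul_le_mul_of_nonneg_left (hu s ⟨ht.1.trans hs.1.le, hs.2⟩) (norm_nonneg _)
    _ ≤ ∫ s in (0:ℝ)..1, ‖σ₂ s‖ * F s := by
        refine intervalIntegral.integral_mono_interval ht.1 ht.2 le_rfl ?_ hbound
        filter_upwards [ae_restrict_mem measurableSet_Ioc] with s hs
        exact mul_nonneg (norm_nonneg _) ((norm_nonneg _).trans (hu s ⟨hs.1.le, hs.2⟩))

theorem norm_snd_le (h : IntegralSystem σ₁ σ₂ μ u z) (hσ₂ : IntervalIntegrable σ₂ volume 0 1)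
    {U : ℝ} (hU : ∀ s ∈ Icc (0:ℝ) 1, ‖u s‖ ≤ U) {t : ℝ} (ht : t ∈ Icc (0:ℝ) 1) :
    ‖z t‖ ≤ 1 + (∫ s in (0:ℝ)..1, ‖σ₂ s‖) * U := by
  have hz := h.norm_snd_sub_one_le hσ₂ continuousOn_const hU ht
  rw [intervalIntegral.integral_mul_const] at hz
  have := norm_le_norm_add_norm_sub' (z t) 1
  rw [norm_one] at this
  linarith

theorem norm_snd_sub_one_le_of_norm_fst_le_gamma01 (h : IntegralSystem σ₁ σ₂ μ u z)
    (hσ₁ : IntervalIntegrable σ₁ volume 0 1) (hσ₂ : IntervalIntegrable σ₂ volume 0 1) {A C : ℝ}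
    (hu : ∀ s ∈ Icc (0:ℝ) 1, ‖u s‖ ≤ gamma01 σ₁ μ s * A + C) {t : ℝ} (ht : t ∈ Icc (0:ℝ) 1) :
    ‖z t - 1‖ ≤ A * (∫ s in (0:ℝ)..1, ‖σ₂ s‖ * gamma01 σ₁ μ s)
      + C * ∫ s in (0:ℝ)..1, ‖σ₂ s‖ := by
  have hγ := continuousOn_gamma01 (μ := μ) hσ₁
  have hσ₂γ : IntervalIntegrable (fun s => ‖σ₂ s‖ * gamma01 σ₁ μ s) volume 0 1 :=
    hσ₂.norm.mul_continuousOn (by rwa [uIcc_of_le zero_le_one])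
  refine (h.norm_snd_sub_one_le hσ₂ (F := fun s => gamma01 σ₁ μ s * A + C)
    ((hγ.mul continuousOn_const).add continuousOn_const) hu ht).trans_eq ?_
  rw [intervalIntegral.integral_congr (g := fun s =>
      A * (‖σ₂ s‖ * gamma01 σ₁ μ s) + C * ‖σ₂ s‖) fun s _ => by ring,
    intervalIntegral.integral_add (hσ₂γ.const_mul _) (hσ₂.norm.const_mul _),
    intervalIntegral.integral_const_mul, intervalIntegral.integral_const_mul]

theorem exists_norm_snd_sub_one_le (h : IntegralSystem σ₁ σ₂ μ u z) (hr : 0 ≤ r)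
    (hμ : -r ≤ μ.im) (hσ₁ : IntervalIntegrable σ₁ volume 0 1)
    (hσ₂ : IntervalIntegrable σ₂ volume 0 1) {S γ : ℝ} (hn₁ : ∫ s in (0:ℝ)..1, ‖σ₁ s‖ ≤ S)
    (hn₂ : ∫ s in (0:ℝ)..1, ‖σ₂ s‖ ≤ S) (hB : ∫ s in (0:ℝ)..1, ‖σ₂ s‖ * gamma01 σ₁ μ s ≤ S * γ) :
    ∃ M, (∀ t ∈ Icc (0:ℝ) 1, ‖z t - 1‖ ≤ M) ∧
      M ≤ S * γ + 2 * Real.exp (4 * r) * S ^ 3 * γ * (1 + M) := by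
  obtain ⟨x₀, hx₀, hmax⟩ := isCompact_Icc.exists_isMaxOn (nonempty_Icc.2 zero_le_one)
    (h.continuousOn_snd.sub continuousOn_const).norm
  set M := ‖z x₀ - 1‖
  have hM : ∀ t ∈ Icc (0:ℝ) 1, ‖z t - 1‖ ≤ M := fun t ht => hmax ht
  refine ⟨M, hM, ?_⟩
  set κ := Real.exp (2 * r)
  set n₁ := ∫ s in (0:ℝ)..1, ‖σ₁ s‖
  set n₂ := ∫ s in (0:ℝ)..1, ‖σ₂ s‖
  set B := ∫ s in (0:ℝ)..1, ‖σ₂ s‖ * gamma01 σ₁ μ s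
  have hκ : 1 ≤ κ := Real.one_le_exp (by positivity)
  have hn₁0 : 0 ≤ n₁ := intervalIntegral.integral_nonneg zero_le_one fun _ _ => norm_nonneg _
  have hn₂0 : 0 ≤ n₂ := intervalIntegral.integral_nonneg zero_le_one fun _ _ => norm_nonneg _
  have hB0 : 0 ≤ B := intervalIntegral.integral_nonneg zero_le_one fun _ _ =>
    mul_nonneg (norm_nonneg _) (norm_nonneg _)
  have hS : 0 ≤ S := hn₁0.trans hn₁
  have hM0 : 0 ≤ M := norm_nonneg _
  set U := κ * (1 + M) * n₁
  have hU : ∀ t ∈ Icc (0:ℝ) 1, ‖u t‖ ≤ U := by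
    refine fun t ht => h.norm_fst_le hr hμ hσ₁ (fun s hs => ?_) ht
    have := norm_le_norm_add_norm_sub' (z s) 1
    rw [norm_one] at this
    linarith [hM s hs]
  have hu : ∀ t ∈ Icc (0:ℝ) 1, ‖u t‖ ≤ gamma01 σ₁ μ t * (1 + n₂ * U) + κ * U * B := by
    refine fun t ht => (h.norm_fst_le_gamma01_mul hr hμ hσ₁ hσ₂ hU ht).trans ?_
    gcongr
    exacts [norm_nonneg _, h.norm_snd_le hσ₂ hU ht]
  have hexp : Real.exp (4 * r) = κ * κ := by
    rw [← Real.exp_add]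
    ring_nf
  calc M ≤ (1 + n₂ * U) * B + κ * U * B * n₂ :=
        h.norm_snd_sub_one_le_of_norm_fst_le_gamma01 hσ₁ hσ₂ hu hx₀
    _ ≤ B + 2 * κ * n₂ * B * U := by
        nlinarith [mul_nonneg (mul_nonneg hn₂0 hB0) (by positivity : 0 ≤ U)]
    _ = B + 2 * Real.exp (4 * r) * n₁ * n₂ * B * (1 + M) := by
        rw [hexp]
        ring
    _ ≤ S * γ + 2 * Real.exp (4 * r) * S * S * (S * γ) * (1 + M) := by gcongr
    _ = S * γ + 2 * Real.exp (4 * r) * S ^ 3 * γ * (1 + M) := by ring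

theorem norm_fst_le_and_norm_snd_sub_one_le (h : IntegralSystem σ₁ σ₂ μ u z) (hr : 0 ≤ r)
    (hμ : -r ≤ μ.im) (hσ₁ : IntervalIntegrable σ₁ volume 0 1)
    (hσ₂ : IntervalIntegrable σ₂ volume 0 1) {S a γ : ℝ} (hn₁ : ∫ s in (0:ℝ)..1, ‖σ₁ s‖ ≤ S)
    (hn₂ : ∫ s in (0:ℝ)..1, ‖σ₂ s‖ ≤ S) (hB : ∫ s in (0:ℝ)..1, ‖σ₂ s‖ * gamma01 σ₁ μ s ≤ S * γ)
    (ha : 2 * Real.exp (4 * r) * S ^ 3 ≤ a) (hγ : 0 ≤ γ) (haγ : a * γ ≤ 1 / 2)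
    {t : ℝ} (ht : t ∈ Icc (0:ℝ) 1) :
    ‖u t‖ ≤ gamma01 σ₁ μ t + Real.exp (2 * r) * (2 * (S + a) * γ) * S ∧
      ‖z t - 1‖ ≤ 2 * (S + a) * γ := by
  obtain ⟨M, hM, hMle⟩ := h.exists_norm_snd_sub_one_le hr hμ hσ₁ hσ₂ hn₁ hn₂ hB
  have hM0 : 0 ≤ M := (norm_nonneg _).trans (hM 0 ⟨le_rfl, zero_le_one⟩)
  have hM2 : M ≤ 2 * (S + a) * γ := by
    nlinarith [mul_le_mul_of_nonneg_right ha (by positivity : 0 ≤ γ * (1 + M)),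
      mul_le_mul_of_nonneg_right haγ hM0]
  have hM2' : ∀ s ∈ Icc (0:ℝ) 1, ‖z s - 1‖ ≤ 2 * (S + a) * γ := fun s hs => (hM s hs).trans hM2
  refine ⟨(h.norm_fst_le_gamma01_add hr hμ hσ₁ hM2' ht).trans ?_, hM2' t ht⟩
  have : 0 ≤ 2 * (S + a) * γ := hM0.trans hM2
  gcongr

end IntegralSystem

section LpBounds

variable {α E : Type*} [MeasurableSpace α] [NormedAddCommGroup E] {ν : Measure α} {p q : ℝ≥0∞}

theorem integral_norm_mul_le {f : α → E} {g : α → ℝ} (hpq : 1 / p + 1 / q = 1)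
    (hf : MemLp f p ν) (hg : MemLp g q ν) :
    ∫ x, ‖f x‖ * g x ∂ν ≤ (eLpNorm f p ν).toReal * (eLpNorm g q ν).toReal := by
  have : p.HolderTriple q 1 := ⟨by simpa [one_div] using hpq⟩
  have holder : eLpNorm (fun x => ‖f x‖ * g x) 1 ν ≤ eLpNorm f p ν * eLpNorm g q ν := by
    simpa using eLpNorm_le_eLpNorm_mul_eLpNorm'_of_norm hf.1 hg.1 (fun a b => ‖a‖ * b) 1
      (ae_of_all _ fun x => by simp)
  calc ∫ x, ‖f x‖ * g x ∂ν ≤ ∫ x, ‖‖f x‖ * g x‖ ∂ν :=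
        (Real.le_norm_self _).trans (norm_integral_le_integral_norm _)
    _ = (eLpNorm (fun x => ‖f x‖ * g x) 1 ν).toReal := by
        rw [eLpNorm_one_eq_lintegral_enorm]
        exact integral_norm_eq_lintegral_enorm (f := fun x => ‖f x‖ * g x) (hf.1.norm.mul hg.1)
    _ ≤ (eLpNorm f p ν).toReal * (eLpNorm g q ν).toReal := by
        rw [← ENNReal.toReal_mul]
        exact ENNReal.toReal_mono (ENNReal.mul_ne_top hf.2.ne hg.2.ne) holder

theorem integral_norm_le_toReal_eLpNorm [IsProbabilityMeasure ν] {f : α → E} (hp : 1 ≤ p)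
    (hf : MemLp f p ν) : ∫ x, ‖f x‖ ∂ν ≤ (eLpNorm f p ν).toReal := by
  rw [integral_norm_eq_lintegral_enorm hf.1, ← eLpNorm_one_eq_lintegral_enorm]
  exact ENNReal.toReal_mono hf.2.ne (eLpNorm_le_eLpNorm_of_exponent_le hp hf.1)

end LpBounds

instance : IsProbabilityMeasure (volume.restrict (Icc (0:ℝ) 1)) := ⟨by simp⟩

theorem intervalIntegral_zero_one_eq (f : ℝ → ℝ) :
    ∫ t in (0:ℝ)..1, f t = ∫ t, f t ∂(volume.restrict (Icc (0:ℝ) 1)) := by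
  rw [intervalIntegral.integral_of_le zero_le_one, integral_Icc_eq_integral_Ioc]

theorem ContinuousOn.memLp_restrict_Icc {f : ℝ → ℝ} {a b : ℝ} (hf : ContinuousOn f (Icc a b))
    (p : ℝ≥0∞) : MemLp f p (volume.restrict (Icc a b)) :=
  let ⟨C, hC⟩ := isCompact_Icc.exists_bound_of_continuousOn hf
  MemLp.of_bound (hf.aestronglyMeasurable measurableSet_Icc) C
    ((ae_restrict_iff' measurableSet_Icc).2 (ae_of_all _ hC))

theorem MeasureTheory.MemLp.intervalIntegrable_of_restrict_Icc {σ : ℝ → ℂ} {p : ℝ≥0∞}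
    {a b : ℝ} (hab : a ≤ b) (hp : 1 ≤ p) (hσ : MemLp σ p (volume.restrict (Icc a b))) :
    IntervalIntegrable σ volume a b :=
  (intervalIntegrable_iff_integrableOn_Icc_of_le hab).2 (hσ.integrable hp)

section SigmaNorm

variable {σ₁ σ₂ : ℝ → ℂ} {p : ℝ≥0∞}

theorem toReal_eLpNorm_le_sigmaNorm (hσ₁ : MemLp σ₁ p (volume.restrict (Icc (0:ℝ) 1)))
    (hσ₂ : MemLp σ₂ p (volume.restrict (Icc (0:ℝ) 1))) :
    (eLpNorm σ₁ p (volume.restrict (Icc (0:ℝ) 1))).toReal ≤ sigmaNorm σ₁ σ₂ p ∧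
      (eLpNorm σ₂ p (volume.restrict (Icc (0:ℝ) 1))).toReal ≤ sigmaNorm σ₁ σ₂ p := by
  have hσ := (hσ₁.norm.sup hσ₂.norm).2.ne
  exact ⟨ENNReal.toReal_mono hσ (eLpNorm_mono_real fun x => le_max_left _ _),
    ENNReal.toReal_mono hσ (eLpNorm_mono_real fun x => le_max_right _ _)⟩

theorem integral_norm_le_sigmaNorm (hp : 1 ≤ p)
    (hσ₁ : MemLp σ₁ p (volume.restrict (Icc (0:ℝ) 1)))
    (hσ₂ : MemLp σ₂ p (volume.restrict (Icc (0:ℝ) 1))) :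
    ∫ s in (0:ℝ)..1, ‖σ₁ s‖ ≤ sigmaNorm σ₁ σ₂ p ∧ ∫ s in (0:ℝ)..1, ‖σ₂ s‖ ≤ sigmaNorm σ₁ σ₂ p := by
  rw [intervalIntegral_zero_one_eq, intervalIntegral_zero_one_eq]
  obtain ⟨h₁, h₂⟩ := toReal_eLpNorm_le_sigmaNorm hσ₁ hσ₂
  exact ⟨(integral_norm_le_toReal_eLpNorm hp hσ₁).trans h₁,
    (integral_norm_le_toReal_eLpNorm hp hσ₂).trans h₂⟩

theorem integral_norm_mul_le_sigmaNorm_mul {q : ℝ≥0∞} (hpq : 1 / p + 1 / q = 1)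
    (hσ₁ : MemLp σ₁ p (volume.restrict (Icc (0:ℝ) 1)))
    (hσ₂ : MemLp σ₂ p (volume.restrict (Icc (0:ℝ) 1))) {G : ℝ → ℝ}
    (hG : ContinuousOn G (Icc 0 1)) :
    ∫ s in (0:ℝ)..1, ‖σ₂ s‖ * G s
      ≤ sigmaNorm σ₁ σ₂ p * (eLpNorm G q (volume.restrict (Icc (0:ℝ) 1))).toReal := by
  rw [intervalIntegral_zero_one_eq]
  exact (integral_norm_mul_le hpq hσ₂ (hG.memLp_restrict_Icc q)).trans
    (mul_le_mul_of_nonneg_right (toReal_eLpNorm_le_sigmaNorm hσ₁ hσ₂).2 ENNReal.toReal_nonneg)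

end SigmaNorm

theorem stmt11_general
    (p q : ℝ≥0∞) (hp1 : 1 ≤ p) (hpq : 1/p + 1/q = 1)
    (σ₁ σ₂ : ℝ → ℂ)
    (hσ₁ : MemLp σ₁ p (volume.restrict (Icc (0:ℝ) 1)))
    (hσ₂ : MemLp σ₂ p (volume.restrict (Icc (0:ℝ) 1)))
    (r : ℝ) (hr : 0 ≤ r) :
    ∃ C > 0, ∀ μ : ℂ, -r < μ.im →
      gamma1 σ₁ q μ ≤ 1 / (2 * (2 * Real.exp (4*r) * (sigmaNorm σ₁ σ₂ p)^3)) →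
      gamma2 σ₂ q μ ≤ 1 / (2 * (2 * Real.exp (4*r) * (sigmaNorm σ₁ σ₂ p)^3)) →
      ∀ v₁ v₂ : ℝ → ℂ, IsDiracSolution σ₁ σ₂ μ v₁ v₂ → v₁ 0 = 0 → v₂ 1 = 1 →
        ∀ x ∈ Icc (0:ℝ) 1,
          ‖Complex.exp (-(Complex.I * μ * (1 - x))) * v₁ x‖
              ≤ C * (gamma1 σ₁ q μ + gamma2 σ₂ q μ + gamma01 σ₁ μ x + gamma02 σ₂ μ x)
          ∧ ‖Complex.exp (-(Complex.I * μ * (1 - x))) * v₂ x - 1‖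
              ≤ C * (gamma1 σ₁ q μ + gamma2 σ₂ q μ + gamma01 σ₁ μ x + gamma02 σ₂ μ x) := by
  set S := sigmaNorm σ₁ σ₂ p
  set a := 2 * Real.exp (4 * r) * S ^ 3
  have hS : 0 ≤ S := ENNReal.toReal_nonneg
  refine ⟨1 + 2 * (S + a) * (1 + Real.exp (2 * r) * S), by positivity, ?_⟩
  intro μ hμ hγ₁ _ v₁ v₂ hv hv₁ hv₂ x hx
  have hγ : 0 ≤ gamma1 σ₁ q μ := ENNReal.toReal_nonneg
  have haγ : a * gamma1 σ₁ q μ ≤ 1 / 2 := by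
    rcases (show 0 ≤ a by positivity).eq_or_lt with ha | ha
    · simp [← ha]
    · rw [le_div_iff₀ (by positivity)] at hγ₁
      linarith
  have hI₁ := hσ₁.intervalIntegrable_of_restrict_Icc zero_le_one hp1
  obtain ⟨hn₁, hn₂⟩ := integral_norm_le_sigmaNorm hp1 hσ₁ hσ₂
  obtain ⟨hu, hz⟩ := (hv.integralSystem hv₁ hv₂).norm_fst_le_and_norm_snd_sub_one_le
    (S := S) (a := a) (γ := gamma1 σ₁ q μ) hr hμ.le hI₁
    (hσ₂.intervalIntegrable_of_restrict_Icc zero_le_one hp1) hn₁ hn₂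
    (integral_norm_mul_le_sigmaNorm_mul hpq hσ₁ hσ₂ (continuousOn_gamma01 hI₁)) le_rfl hγ haγ hx
  have hγ₂ : 0 ≤ gamma2 σ₂ q μ + gamma02 σ₂ μ x := add_nonneg ENNReal.toReal_nonneg (norm_nonneg _)
  have hγ₀₁ : 0 ≤ gamma01 σ₁ μ x := norm_nonneg _
  have hK : 0 ≤ 2 * (S + a) := by positivity
  have hκ := Real.exp_pos (2 * r)
  constructor
  · refine hu.trans ?_
    nlinarith [mul_nonneg (mul_nonneg hK hκ.le) hS]
  · refine hz.trans ?_
    nlinarith [mul_nonneg (mul_nonneg hK hκ.le) hS]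

/-- rough asymptotics of `(v₁,v₂)`. -/
theorem stmt11
    (p q : ℝ≥0∞) (hp1 : 1 ≤ p) (hp2 : p < 2) (hpq : 1/p + 1/q = 1)
    (σ₁ σ₂ : ℝ → ℂ) (hσ₁m : Measurable σ₁) (hσ₂m : Measurable σ₂)
    (hσ₁ : MemLp σ₁ p (volume.restrict (Icc (0:ℝ) 1)))
    (hσ₂ : MemLp σ₂ p (volume.restrict (Icc (0:ℝ) 1)))
    (r : ℝ) (hr : 0 ≤ r) :
    ∃ C > 0, ∀ μ : ℂ, -r < μ.im →
      gamma1 σ₁ q μ ≤ 1 / (2 * (2 * Real.exp (4*r) * (sigmaNorm σ₁ σ₂ p)^3)) →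
      gamma2 σ₂ q μ ≤ 1 / (2 * (2 * Real.exp (4*r) * (sigmaNorm σ₁ σ₂ p)^3)) →
      ∀ v₁ v₂ : ℝ → ℂ, IsDiracSolution σ₁ σ₂ μ v₁ v₂ → v₁ 0 = 0 → v₂ 1 = 1 →
        ∀ x ∈ Icc (0:ℝ) 1,
          ‖Complex.exp (-(Complex.I * μ * (1 - x))) * v₁ x‖
              ≤ C * (gamma1 σ₁ q μ + gamma2 σ₂ q μ + gamma01 σ₁ μ x + gamma02 σ₂ μ x)
          ∧ ‖Complex.exp (-(Complex.I * μ * (1 - x))) * v₂ x - 1‖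
              ≤ C * (gamma1 σ₁ q μ + gamma2 σ₂ q μ + gamma01 σ₁ μ x + gamma02 σ₂ μ x) :=
  stmt11_general p q hp1 hpq σ₁ σ₂ hσ₁ hσ₂ r hr
end
end

section
/- For every μ ∈ ℂ and every x ∈ [0,1], the following two exact identities hold: (i) −(K₂e)(0) ∫₀ˣ e^{−2iμt} σ₁(t) dt + ∫₀ˣ e^{−2iμt} σ₁(t) (K₂e)(t) dt = −∫₀ˣ e^{2iμs} σ₂(s) (∫ₛˣ e^{−2iμt} σ₁(t) dt)(∫₀ˢ e^{−2iμτ} σ₁(τ) dτ) ds; (ii) ((K₂e)(x) − (K₂e)(0)) ∫₀¹ e^{2iμt} σ₂(t) dt + ∫₀¹ e^{2iμt} σ₂(t) (K₁e)(t) dt − ∫ₓ¹ e^{2iμt} σ₂(t) (K₁e)(t) dt = −∫₀ˣ e^{2iμt} σ₂(t) ∫₀ᵗ e^{−2iμs} σ₁(s) ∫₀ˢ e^{2iμτ} σ₂(τ) dτ ds dt. -/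
/-!
With `g t = e^{-2iμt} σ₁ t`, `f t = e^{2iμt} σ₂ t` and their primitives `G`, `F` from `0`, the
exponential kernels factor, so `K₂e t = ∫ₜ¹ f G` and `K₁e t = ∫₀ᵗ g(s) (F 1 - F s) ds`. Identity
(ii) is then bookkeeping with integrals over adjacent intervals; identity (i) additionally needs
Fubini on the triangle `0 ≤ s ≤ t ≤ x` to exchange the order of integration.
-/

open MeasureTheory Set
open scoped ENNReal

noncomputable section

open Complex

section TriangleIdentities

variable {𝕜 : Type*} [RCLike 𝕜] {f g : ℝ → 𝕜} {a b x : ℝ}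

theorem integral_mul_integral_triangle_swap {h : ℝ → 𝕜} (hab : a ≤ b)
    (hg : IntervalIntegrable g volume a b) (hh : IntervalIntegrable h volume a b) :
    ∫ t in a..b, g t * ∫ s in a..t, h s = ∫ s in a..b, h s * ∫ t in s..b, g t := by
  rw [intervalIntegral.integral_of_le hab, intervalIntegral.integral_of_le hab]
  set ν := volume.restrict (Ioc a b)
  let F : ℝ → ℝ → 𝕜 := fun t s =>
    {q : ℝ × ℝ | q.2 ≤ q.1}.indicator (fun q => g q.1 * h q.2) (t, s)
  have hF : Integrable (Function.uncurry F) (ν.prod ν) :=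
    (Integrable.mul_prod (μ := ν) (ν := ν) hg.1 hh.1).indicator
      (measurableSet_le measurable_snd measurable_fst)
  have inner_snd : ∀ t ∈ Ioc a b, ∫ s, F t s ∂ν = g t * ∫ s in a..t, h s := by
    intro t ht
    have hFt : F t = (Iic t).indicator (fun s => g t * h s) := by
      ext s; simp [F, indicator_apply]
    rw [hFt, integral_indicator measurableSet_Iic, Measure.restrict_restrict measurableSet_Iic,
      Iic_inter_Ioc_of_le ht.2, integral_const_mul, intervalIntegral.integral_of_le ht.1.le]
  have inner_fst : ∀ s ∈ Ioc a b, ∫ t, F t s ∂ν = h s * ∫ t in s..b, g t := by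
    intro s hs
    have hFs : (fun t => F t s) = (Ici s).indicator (fun t => g t * h s) := by
      ext t; simp [F, indicator_apply]
    have hset : Ici s ∩ Ioc a b = Icc s b := by
      ext t; simp only [mem_inter_iff, mem_Ici, mem_Ioc, mem_Icc]
      exact ⟨fun ⟨h1, _, h3⟩ => ⟨h1, h3⟩, fun ⟨h1, h2⟩ => ⟨h1, hs.1.trans_le h1, h2⟩⟩
    rw [hFs, integral_indicator measurableSet_Ici, Measure.restrict_restrict measurableSet_Ici,
      hset, integral_Icc_eq_integral_Ioc, integral_mul_const,
      intervalIntegral.integral_of_le hs.2, mul_comm]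
  calc ∫ t in Ioc a b, g t * ∫ s in a..t, h s
      = ∫ t, ∫ s, F t s ∂ν ∂ν := (setIntegral_congr_fun measurableSet_Ioc inner_snd).symm
    _ = ∫ s, ∫ t, F t s ∂ν ∂ν := integral_integral_swap hF
    _ = ∫ s in Ioc a b, h s * ∫ t in s..b, g t := setIntegral_congr_fun measurableSet_Ioc inner_fst

theorem IntervalIntegrable.mul_primitive (hf : IntervalIntegrable f volume a b)
    (hg : IntervalIntegrable g volume a b) :
    IntervalIntegrable (fun t => f t * ∫ τ in a..t, g τ) volume a b :=
  hf.mul_continuousOn (intervalIntegral.continuousOn_primitive_interval' hg left_mem_uIcc)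

theorem neg_mul_primitive_add_integral_mul_tail_eq (hg : IntervalIntegrable g volume a b)
    (hf : IntervalIntegrable f volume a b) (hx : x ∈ Icc a b) :
    -(∫ r in a..b, f r * ∫ τ in a..r, g τ) * (∫ t in a..x, g t)
      + ∫ t in a..x, g t * ∫ r in t..b, f r * ∫ τ in a..r, g τ
    = -∫ s in a..x, f s * (∫ t in s..x, g t) * ∫ τ in a..s, g τ := by
  set fG := fun r => f r * ∫ τ in a..r, g τ
  have hfG : IntervalIntegrable fG volume a b := hf.mul_primitive hg
  have hsub : uIcc a x ⊆ uIcc a b := uIcc_subset_uIcc_left (Icc_subset_uIcc hx)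
  have hgx : IntervalIntegrable g volume a x := hg.mono_set hsub
  have hfGx : IntervalIntegrable fG volume a x := hfG.mono_set hsub
  have htail : EqOn (fun t => g t * ∫ r in t..b, fG r)
      (fun t => (∫ r in a..b, fG r) * g t - g t * ∫ r in a..t, fG r) (uIcc a x) := fun t ht => by
    simp only
    rw [← intervalIntegral.integral_interval_sub_left hfG
      (hfG.mono_set (uIcc_subset_uIcc_left (hsub ht)))]
    ring
  rw [intervalIntegral.integral_congr htail,
    intervalIntegral.integral_sub (hgx.const_mul _) (hgx.mul_primitive hfGx),
    intervalIntegral.integral_const_mul, integral_mul_integral_triangle_swap hx.1 hgx hfGx]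
  have hreorder : ∫ s in a..x, fG s * ∫ t in s..x, g t
      = ∫ s in a..x, f s * (∫ t in s..x, g t) * ∫ τ in a..s, g τ :=
    intervalIntegral.integral_congr fun s _ => by simp only [fG]; ring
  rw [hreorder]
  ring

theorem sub_mul_add_integral_mul_sub_integral_mul_eq (hg : IntervalIntegrable g volume a b)
    (hf : IntervalIntegrable f volume a b) (hx : x ∈ uIcc a b) :
    ((∫ r in x..b, f r * ∫ τ in a..r, g τ) - ∫ r in a..b, f r * ∫ τ in a..r, g τ)
        * (∫ t in a..b, f t)
      + (∫ t in a..b, f t * ∫ s in a..t, g s * ∫ r in s..b, f r)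
      - ∫ t in x..b, f t * ∫ s in a..t, g s * ∫ r in s..b, f r
    = -∫ t in a..x, f t * ∫ s in a..t, g s * ∫ τ in a..s, f τ := by
  set fG := fun r => f r * ∫ τ in a..r, g τ
  set fP := fun t => f t * ∫ s in a..t, g s * ∫ τ in a..s, f τ
  have hfG : IntervalIntegrable fG volume a b := hf.mul_primitive hg
  have hfP : IntervalIntegrable fP volume a b := hf.mul_primitive (hg.mul_primitive hf)
  have hK1 : EqOn (fun t => f t * ∫ s in a..t, g s * ∫ r in s..b, f r)
      (fun t => (∫ r in a..b, f r) * fG t - fP t) (uIcc a b) := fun t ht => by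
    have hsub : uIcc a t ⊆ uIcc a b := uIcc_subset_uIcc_left ht
    have htail : EqOn (fun s => g s * ∫ r in s..b, f r)
        (fun s => (∫ r in a..b, f r) * g s - g s * ∫ τ in a..s, f τ) (uIcc a t) := fun s hs => by
      simp only
      rw [← intervalIntegral.integral_interval_sub_left hf
        (hf.mono_set (uIcc_subset_uIcc_left (hsub hs)))]
      ring
    simp only [fG, fP]
    rw [intervalIntegral.integral_congr htail,
      intervalIntegral.integral_sub ((hg.mono_set hsub).const_mul _)
        ((hg.mul_primitive hf).mono_set hsub),
      intervalIntegral.integral_const_mul]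
    ring
  have htail : ∀ c ∈ uIcc a b, ∫ t in c..b, f t * ∫ s in a..t, g s * ∫ r in s..b, f r
      = (∫ r in a..b, f r) * (∫ t in c..b, fG t) - ∫ t in c..b, fP t := fun c hc => by
    have hsub : uIcc c b ⊆ uIcc a b := uIcc_subset_uIcc_right hc
    rw [intervalIntegral.integral_congr (hK1.mono hsub),
      intervalIntegral.integral_sub ((hfG.mono_set hsub).const_mul _) (hfP.mono_set hsub),
      intervalIntegral.integral_const_mul]
  rw [htail a left_mem_uIcc, htail x hx,
    ← intervalIntegral.integral_add_adjacent_intervals (hfG.mono_set (uIcc_subset_uIcc_left hx))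
      (hfG.mono_set (uIcc_subset_uIcc_right hx)),
    ← intervalIntegral.integral_add_adjacent_intervals (hfP.mono_set (uIcc_subset_uIcc_left hx))
      (hfP.mono_set (uIcc_subset_uIcc_right hx))]
  ring

end TriangleIdentities

theorem cexp_mul_sub (c : ℂ) (r s : ℝ) :
    cexp (c * (r - s)) = cexp (c * r) * cexp (-(c * s)) := by
  rw [← Complex.exp_add, mul_sub, sub_eq_add_neg]

theorem K1_eFun_apply (σ₁ σ₂ : ℝ → ℂ) (μ : ℂ) (x : ℝ) :
    K1 σ₁ σ₂ μ eFun x = ∫ s in (0:ℝ)..x, cexp (-(2 * I * μ * s)) * σ₁ s *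
      ∫ r in s..(1:ℝ), cexp (2 * I * μ * r) * σ₂ r := by
  refine intervalIntegral.integral_congr fun s _ => ?_
  have hsplit : ∀ r : ℝ, cexp (2 * I * μ * (r - s)) * σ₂ r * eFun r
      = cexp (-(2 * I * μ * s)) * (cexp (2 * I * μ * r) * σ₂ r) := fun r => by
    rw [cexp_mul_sub, eFun]; ring
  simp only [hsplit, intervalIntegral.integral_const_mul]
  ring

theorem K2_eFun_apply (σ₁ σ₂ : ℝ → ℂ) (μ : ℂ) (x : ℝ) :
    K2 σ₁ σ₂ μ eFun x = ∫ r in x..(1:ℝ), cexp (2 * I * μ * r) * σ₂ r *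
      ∫ τ in (0:ℝ)..r, cexp (-(2 * I * μ * τ)) * σ₁ τ := by
  refine intervalIntegral.integral_congr fun r _ => ?_
  have hsplit : ∀ s : ℝ, cexp (2 * I * μ * (r - s)) * σ₁ s * eFun s
      = cexp (2 * I * μ * r) * (cexp (-(2 * I * μ * s)) * σ₁ s) := fun s => by
    rw [cexp_mul_sub, eFun]; ring
  simp only [hsplit, intervalIntegral.integral_const_mul]
  ring

theorem MeasureTheory.MemLp.intervalIntegrable {E : Type*} [NormedAddCommGroup E] {σ : ℝ → E}
    {p : ℝ≥0∞} {a b : ℝ} (hab : a ≤ b) (hσ : MemLp σ p (volume.restrict (Icc a b)))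
    (hp : 1 ≤ p) : IntervalIntegrable σ volume a b :=
  (intervalIntegrable_iff_integrableOn_Icc_of_le hab).mpr (hσ.integrable hp)

theorem stmt18_general
    (p : ℝ≥0∞) (hp1 : 1 ≤ p)
    (σ₁ σ₂ : ℝ → ℂ)
    (hσ₁ : MemLp σ₁ p (volume.restrict (Icc (0:ℝ) 1)))
    (hσ₂ : MemLp σ₂ p (volume.restrict (Icc (0:ℝ) 1))) :
    ∀ μ : ℂ, ∀ x ∈ Icc (0:ℝ) 1,
      (-(K2 σ₁ σ₂ μ eFun 0) * (∫ t in (0:ℝ)..x, Complex.exp (-(2*Complex.I*μ*t)) * σ₁ t)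
          + (∫ t in (0:ℝ)..x, Complex.exp (-(2*Complex.I*μ*t)) * σ₁ t * K2 σ₁ σ₂ μ eFun t)
        = -∫ s in (0:ℝ)..x, Complex.exp (2*Complex.I*μ*s) * σ₂ s *
            (∫ t in s..x, Complex.exp (-(2*Complex.I*μ*t)) * σ₁ t) *
            (∫ τ in (0:ℝ)..s, Complex.exp (-(2*Complex.I*μ*τ)) * σ₁ τ))
      ∧ ((K2 σ₁ σ₂ μ eFun x - K2 σ₁ σ₂ μ eFun 0) *
            (∫ t in (0:ℝ)..1, Complex.exp (2*Complex.I*μ*t) * σ₂ t)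
          + (∫ t in (0:ℝ)..1, Complex.exp (2*Complex.I*μ*t) * σ₂ t * K1 σ₁ σ₂ μ eFun t)
          - (∫ t in x..(1:ℝ), Complex.exp (2*Complex.I*μ*t) * σ₂ t * K1 σ₁ σ₂ μ eFun t)
        = -∫ t in (0:ℝ)..x, Complex.exp (2*Complex.I*μ*t) * σ₂ t *
            ∫ s in (0:ℝ)..t, Complex.exp (-(2*Complex.I*μ*s)) * σ₁ s *
              ∫ τ in (0:ℝ)..s, Complex.exp (2*Complex.I*μ*τ) * σ₂ τ) := by
  intro μ x hx
  have hg : IntervalIntegrable (fun t : ℝ => cexp (-(2 * I * μ * t)) * σ₁ t) volume 0 1 :=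
    (hσ₁.intervalIntegrable zero_le_one hp1).continuousOn_mul (by fun_prop)
  have hf : IntervalIntegrable (fun t : ℝ => cexp (2 * I * μ * t) * σ₂ t) volume 0 1 :=
    (hσ₂.intervalIntegrable zero_le_one hp1).continuousOn_mul (by fun_prop)
  simp only [K1_eFun_apply, K2_eFun_apply]
  exact ⟨neg_mul_primitive_add_integral_mul_tail_eq hg hf hx,
    sub_mul_add_integral_mul_sub_integral_mul_eq hg hf (Icc_subset_uIcc hx)⟩

/-- two further exact identities relating `K₁` and `K₂`. -/
theorem stmt18
    (p : ℝ≥0∞) (hp1 : 1 ≤ p) (hp2 : p < 2)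
    (σ₁ σ₂ : ℝ → ℂ) (hσ₁m : Measurable σ₁) (hσ₂m : Measurable σ₂)
    (hσ₁ : MemLp σ₁ p (volume.restrict (Icc (0:ℝ) 1)))
    (hσ₂ : MemLp σ₂ p (volume.restrict (Icc (0:ℝ) 1))) :
    ∀ μ : ℂ, ∀ x ∈ Icc (0:ℝ) 1,
      (-(K2 σ₁ σ₂ μ eFun 0) * (∫ t in (0:ℝ)..x, Complex.exp (-(2*Complex.I*μ*t)) * σ₁ t)
          + (∫ t in (0:ℝ)..x, Complex.exp (-(2*Complex.I*μ*t)) * σ₁ t * K2 σ₁ σ₂ μ eFun t)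
        = -∫ s in (0:ℝ)..x, Complex.exp (2*Complex.I*μ*s) * σ₂ s *
            (∫ t in s..x, Complex.exp (-(2*Complex.I*μ*t)) * σ₁ t) *
            (∫ τ in (0:ℝ)..s, Complex.exp (-(2*Complex.I*μ*τ)) * σ₁ τ))
      ∧ ((K2 σ₁ σ₂ μ eFun x - K2 σ₁ σ₂ μ eFun 0) *
            (∫ t in (0:ℝ)..1, Complex.exp (2*Complex.I*μ*t) * σ₂ t)
          + (∫ t in (0:ℝ)..1, Complex.exp (2*Complex.I*μ*t) * σ₂ t * K1 σ₁ σ₂ μ eFun t)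
          - (∫ t in x..(1:ℝ), Complex.exp (2*Complex.I*μ*t) * σ₂ t * K1 σ₁ σ₂ μ eFun t)
        = -∫ t in (0:ℝ)..x, Complex.exp (2*Complex.I*μ*t) * σ₂ t *
            ∫ s in (0:ℝ)..t, Complex.exp (-(2*Complex.I*μ*s)) * σ₁ s *
              ∫ τ in (0:ℝ)..s, Complex.exp (2*Complex.I*μ*τ) * σ₂ τ) :=
  stmt18_general p hp1 σ₁ σ₂ hσ₁ hσ₂
end
end
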